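/- Galerkin orthogonality and Céa's lemma: if u ∈ V solves a(v,u) = ℓ(v) for all v ∈ V and u_h ∈ V_h ⊆ V solves a(v_h,u_h) = ℓ(v_h) for all v_h ∈ V_h, where a is continuous with constant C and coercive with constant α, then ‖u − u_h‖ ≤ (C/α) inf_{v_h ∈ V_h} ‖u − v_h‖. -/

import Mathlib

/-! Coercivity and Galerkin orthogonality `a (vh - uh) (u - uh) = 0` give, for every `vh ∈ Vh`,
`α ‖u - uh‖² ≤ a (u - uh) (u - uh) = a (u - vh) (u - uh) ≤ C ‖u - vh‖ ‖u - uh‖`;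
divide by `α ‖u - uh‖` and take the infimum over `vh`. -/

open Set

theorem galerkin_orthogonality {R M N P : Type*} [CommRing R] [AddCommGroup M] [Module R M]
    [AddCommGroup N] [Module R N] [AddCommGroup P] [Module R P]
    (a : M →ₗ[R] N →ₗ[R] P) {Vh : Submodule R M} {ℓ : M → P} {u uh : N}
    (hu : ∀ v, a v u = ℓ v) (huh : ∀ vh ∈ Vh, a vh uh = ℓ vh) :
    ∀ wh ∈ Vh, a wh (u - uh) = 0 := fun wh hwh => by
  rw [map_sub, hu, huh wh hwh, sub_self]

theorem mul_norm_le_of_apply_self_eq {E : Type*} [NormedAddCommGroup E] [Module ℝ E]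
    (a : E →ₗ[ℝ] E →ₗ[ℝ] ℝ) {C α : ℝ} (hcont : ∀ u v, |a u v| ≤ C * ‖u‖ * ‖v‖)
    (hcoer : ∀ v, α * ‖v‖ ^ 2 ≤ a v v) {x y : E} (h : a x x = a y x) :
    α * ‖x‖ ≤ C * ‖y‖ := by
  rcases (norm_nonneg x).eq_or_lt with hx | hx
  · have hy : 0 ≤ C * ‖y‖ * ‖y‖ := (abs_nonneg _).trans (hcont y y)
    rw [← hx, mul_zero]
    rcases (norm_nonneg y).eq_or_lt with hy0 | hy0
    · rw [← hy0, mul_zero]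
    · exact nonneg_of_mul_nonneg_left hy hy0
  · refine le_of_mul_le_mul_right ?_ hx
    calc α * ‖x‖ * ‖x‖ = α * ‖x‖ ^ 2 := by ring
      _ ≤ a y x := h ▸ hcoer x
      _ ≤ C * ‖y‖ * ‖x‖ := (le_abs_self _).trans (hcont y x)

theorem Real.le_mul_ciInf_of_bddBelow {ι : Type*} [Nonempty ι] {f : ι → ℝ}
    (hf : BddBelow (range f)) {b c : ℝ} (h : ∀ i, b ≤ c * f i) : b ≤ c * ⨅ i, f i := by
  rcases le_or_gt 0 c with hc | hc
  · rw [Real.mul_iInf_of_nonneg hc]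
    exact le_ciInf h
  · obtain ⟨i⟩ := ‹Nonempty ι›
    exact (h i).trans (mul_le_mul_of_nonpos_left (ciInf_le hf i) hc.le)

theorem cea_lemma_general
    (V : Type*) [NormedAddCommGroup V] [InnerProductSpace ℝ V]
    (Vh : Submodule ℝ V)
    (a : V →ₗ[ℝ] V →ₗ[ℝ] ℝ)
    (C : ℝ) (hcont : ∀ u v : V, |a u v| ≤ C * ‖u‖ * ‖v‖)
    (α : ℝ) (hα : 0 < α) (hcoer : ∀ v : V, α * ‖v‖ ^ 2 ≤ a v v)
    (ℓ : V →L[ℝ] ℝ)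
    (u : V) (hu : ∀ v : V, a v u = ℓ v)
    (uh : V) (huh : uh ∈ Vh) (huhs : ∀ vh ∈ Vh, a vh uh = ℓ vh) :
    ‖u - uh‖ ≤ (C / α) * ⨅ vh : Vh, ‖u - (vh : V)‖ := by
  have horth := galerkin_orthogonality a hu huhs
  refine Real.le_mul_ciInf_of_bddBelow ⟨0, ?_⟩ fun vh => ?_
  · rintro _ ⟨vh, rfl⟩
    exact norm_nonneg _
  rw [div_mul_eq_mul_div, le_div_iff₀' hα]
  refine mul_norm_le_of_apply_self_eq a hcont hcoer ?_
  have hsplit : u - uh = (u - vh) + (vh - uh) := by abel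
  conv_lhs => arg 1; rw [hsplit]
  rw [map_add, LinearMap.add_apply, horth _ (Vh.sub_mem vh.2 huh), add_zero]

theorem cea_lemma
    (V : Type*) [NormedAddCommGroup V] [InnerProductSpace ℝ V] [CompleteSpace V]
    (Vh : Submodule ℝ V) (hVh : IsClosed (Vh : Set V))
    (a : V →ₗ[ℝ] V →ₗ[ℝ] ℝ)
    (C : ℝ) (hcont : ∀ u v : V, |a u v| ≤ C * ‖u‖ * ‖v‖)
    (α : ℝ) (hα : 0 < α) (hcoer : ∀ v : V, α * ‖v‖ ^ 2 ≤ a v v)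
    (ℓ : V →L[ℝ] ℝ)
    (u : V) (hu : ∀ v : V, a v u = ℓ v)
    (uh : V) (huh : uh ∈ Vh) (huhs : ∀ vh ∈ Vh, a vh uh = ℓ vh) :
    ‖u - uh‖ ≤ (C / α) * ⨅ vh : Vh, ‖u - (vh : V)‖ :=
  cea_lemma_general V Vh a C hcont α hα hcoer ℓ u hu uh huh huhs
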